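/- arXiv:1904.07970 — 8 statements merged into one kernel-verified Lean document; each statement's English description precedes it below -/
import Mathlib

section
/- Let 0 < B < D_h ≤ 2B and let u(t), u(t−1) be independent, each uniformly distributed on [0, D_h]. Then E[ ( u(t) − B − (B − u(t−1))⁺ )⁺ ] = 2(D_h − B)³ / (3 D_h²). -/
/-!
Given last month's usage `v`, the overage is `(u - c)⁺` with threshold `c = B + (B - v)⁺ ≥ 0`,
whose integral over `u ∈ [0, D_h]` is `((D_h - c)⁺)² / 2`. For `v ≥ B` this is `(D_h - B)² / 2`;
for `v < B` it is `((v - (2B - D_h))⁺)² / 2`, and `D_h ≤ 2B` puts `2B - D_h` in `[0, B]`.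
Integrating over `v` gives `(D_h - B)³ / 2 + (D_h - B)³ / 6`.
-/

open intervalIntegral

theorem integral_max_sub_zero_pow {a b c : ℝ} (n : ℕ) (hac : a ≤ c) :
    ∫ x in a..b, max (x - c) 0 ^ (n + 1) = max (b - c) 0 ^ (n + 2) / (n + 2) := by
  have hcont : Continuous fun x : ℝ => max (x - c) 0 ^ (n + 1) := by fun_prop
  have vanish : ∀ d ≤ c, ∫ x in a..d, max (x - c) 0 ^ (n + 1) = 0 := fun d hdc => by
    refine (integral_congr fun x hx => ?_).trans integral_zero
    have : x ≤ c := (Set.mem_uIcc.mp hx).elim (·.2.trans hdc) (·.2.trans hac)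
    simp [max_eq_right (sub_nonpos.mpr this)]
  rcases le_total b c with hbc | hcb
  · rw [vanish b hbc, max_eq_right (sub_nonpos.mpr hbc)]
    simp
  rw [← integral_add_adjacent_intervals (hcont.intervalIntegrable a c)
    (hcont.intervalIntegrable c b), vanish c le_rfl, zero_add, max_eq_left (sub_nonneg.mpr hcb),
    integral_congr (g := fun x => (x - c) ^ (n + 1)) fun x hx => by
      simp [max_eq_left (sub_nonneg.mpr (Set.uIcc_of_le hcb ▸ hx).1)],
    integral_comp_sub_right (fun x => x ^ (n + 1)), integral_pow]
  push_cast
  ring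

theorem integral_sq_max_sub_max_sub_zero {B D : ℝ} (hBD : B ≤ D) (hD2B : D ≤ 2 * B) :
    ∫ v in (0 : ℝ)..D, max (D - B - max (B - v) 0) 0 ^ 2 = 4 * (D - B) ^ 3 / 3 := by
  have hcont : Continuous fun v : ℝ => max (D - B - max (B - v) 0) 0 ^ 2 := by fun_prop
  have hB : 0 ≤ B := by linarith
  have below : ∫ v in (0 : ℝ)..B, max (D - B - max (B - v) 0) 0 ^ 2 = (D - B) ^ 3 / 3 := by
    rw [integral_congr (g := fun v => max (v - (2 * B - D)) 0 ^ (1 + 1)) fun v hv => by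
      rw [Set.uIcc_of_le hB] at hv
      simp only [max_eq_left (sub_nonneg.mpr hv.2)]
      ring_nf,
      integral_max_sub_zero_pow 1 (by linarith), max_eq_left (by linarith)]
    push_cast
    ring
  have above : ∫ v in B..D, max (D - B - max (B - v) 0) 0 ^ 2 = (D - B) ^ 3 := by
    rw [integral_congr (g := fun _ => (D - B) ^ 2) fun v hv => by
      rw [Set.uIcc_of_le hBD] at hv
      simp [max_eq_right (sub_nonpos.mpr hv.1), max_eq_left (sub_nonneg.mpr hBD)],
      integral_const, smul_eq_mul]
    ring
  rw [← integral_add_adjacent_intervals (hcont.intervalIntegrable 0 B)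
    (hcont.intervalIntegrable B D), below, above]
  ring

/-- Expected overage under the rollover data plan when B < D_h ≤ 2B, with this
month's and last month's usages independent uniform on [0, D_h]. -/
theorem expected_overage_rollover (B Dh : ℝ) (hB : 0 < B) (hBD : B < Dh) (hD2B : Dh ≤ 2 * B) :
    (∫ v in (0:ℝ)..Dh, ∫ u in (0:ℝ)..Dh,
        max (u - B - max (B - v) 0) 0 * (1 / Dh) * (1 / Dh))
      = 2 * (Dh - B) ^ 3 / (3 * Dh ^ 2) := by
  have hDh : Dh ≠ 0 := (hB.trans hBD).ne'
  have inner (v : ℝ) : ∫ u in (0:ℝ)..Dh, max (u - B - max (B - v) 0) 0 =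
      max (Dh - B - max (B - v) 0) 0 ^ 2 / 2 := by
    simpa [sub_sub] using
      integral_max_sub_zero_pow 0 (a := 0) (b := Dh) (c := B + max (B - v) 0) (by positivity)
  simp only [integral_mul_const, inner, integral_div,
    integral_sq_max_sub_max_sub_zero hBD.le hD2B]
  field_simp
  ring
end

section
/- Let 0 < B < D_h ≤ 2B. Then 2(D_h − B)³/(3 D_h²) < (D_h − B)²/(2 D_h); that is, the heavy user's expected overage under the rollover data plan is strictly smaller than under the traditional plan. -/
/-! The rollover overage is the traditional one scaled by `4 (D_h - B) / (3 D_h)`, a factor below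
one exactly when `D_h < 4 B`. -/

lemma rollover_overage_eq_mul_traditional (B Dh : ℝ) (hD : Dh ≠ 0) :
    2 * (Dh - B) ^ 3 / (3 * Dh ^ 2) = 4 * (Dh - B) / (3 * Dh) * ((Dh - B) ^ 2 / (2 * Dh)) := by
  field_simp
  ring

/-- For B < D_h ≤ 2B the rollover expected overage is strictly smaller than the
traditional expected overage. -/
theorem rollover_reduces_overage (B Dh : ℝ) (hB : 0 < B) (hBD : B < Dh) (hD2B : Dh ≤ 2 * B) :
    2 * (Dh - B) ^ 3 / (3 * Dh ^ 2) < (Dh - B) ^ 2 / (2 * Dh) := by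
  have hD : 0 < Dh := hB.trans hBD
  have hfactor : 4 * (Dh - B) / (3 * Dh) < 1 := by
    rw [div_lt_one (by positivity)]
    linarith
  have htraditional : 0 < (Dh - B) ^ 2 / (2 * Dh) := by
    have := sub_pos.2 hBD
    positivity
  rw [rollover_overage_eq_mul_traditional B Dh hD.ne']
  exact mul_lt_of_lt_one_left htraditional hfactor
end

section
/- Let D_h > 2B > 0. Then 2(D_h − B)³/(3 D_h²) − (D_h − 2B)³/(6 D_h²) < (D_h − B)²/(2 D_h); that is, even in the D_h > 2B regime the rollover plan strictly reduces a heavy user's expected overage. -/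
theorem traditional_sub_rollover_overage (B Dh : ℝ) (hD : Dh ≠ 0) :
    (Dh - B) ^ 2 / (2 * Dh) - (2 * (Dh - B) ^ 3 / (3 * Dh ^ 2) - (Dh - 2 * B) ^ 3 / (6 * Dh ^ 2))
      = B ^ 2 * (3 * Dh - 4 * B) / (6 * Dh ^ 2) := by
  field_simp
  ring

theorem rollover_overage_lt_traditional (B Dh : ℝ) (hD : Dh ≠ 0) (hB : B ≠ 0)
    (h : 4 * B < 3 * Dh) :
    2 * (Dh - B) ^ 3 / (3 * Dh ^ 2) - (Dh - 2 * B) ^ 3 / (6 * Dh ^ 2)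
      < (Dh - B) ^ 2 / (2 * Dh) := by
  rw [← sub_pos, traditional_sub_rollover_overage B Dh hD]
  have : 0 < 3 * Dh - 4 * B := by linarith
  positivity

/-- For D_h > 2B the rollover expected overage is still strictly smaller than the
traditional expected overage. -/
theorem rollover_reduces_overage_large (B Dh : ℝ) (hB : 0 < B) (hD2B : 2 * B < Dh) :
    2 * (Dh - B) ^ 3 / (3 * Dh ^ 2) - (Dh - 2 * B) ^ 3 / (6 * Dh ^ 2)
      < (Dh - B) ^ 2 / (2 * Dh) :=
  rollover_overage_lt_traditional B Dh (by linarith) hB.ne' (by linarith)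
end

section
/- Let D_l ≤ D_h ≤ 2B ≤ D_l + D_h with D_l, D_h, B > 0, and let u = u_1 + u_2 with u_1, u_2 independent uniform on [0, D_l] and [0, D_h]. Then E[(u − 2B)⁺] = (D_h + D_l − 2B)³ / (6 D_h D_l). -/
/-!
The ramp `t ↦ max (t - c) 0 ^ (n + 2) / (n + 2)` is an antiderivative of `max (t - c) 0 ^ (n + 1)`
away from its kink at `c`, which is enough for the fundamental theorem of calculus. Integrating out
the heavy usage turns the overage into the squared ramp `max (x - (2B - D_h)) 0 ^ 2 / 2` in the
light usage `x` (the lower endpoint contributes nothing because `x ≤ D_l ≤ 2B`); integrating once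
more over `[0, D_l]`, where `0 ≤ 2B - D_h ≤ D_l`, gives `(D_l + D_h - 2B)³ / 6`.
-/

open Set Filter intervalIntegral

lemma hasDerivAt_max_sub_zero_pow_succ_succ (n : ℕ) {c x : ℝ} (hx : x ≠ c) :
    HasDerivAt (fun y : ℝ => max (y - c) 0 ^ (n + 2) / (n + 2)) (max (x - c) 0 ^ (n + 1)) x := by
  rcases hx.lt_or_gt with hlt | hgt
  · have hzero : (fun y : ℝ => max (y - c) 0 ^ (n + 2) / (n + 2)) =ᶠ[nhds x] fun _ => 0 := by
      filter_upwards [Iio_mem_nhds hlt] with y hy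
      rw [max_eq_right (by linarith [mem_Iio.mp hy])]
      simp
    rw [max_eq_right (by linarith)]
    simpa using (hasDerivAt_const x (0 : ℝ)).congr_of_eventuallyEq hzero
  · have hpoly : (fun y : ℝ => max (y - c) 0 ^ (n + 2) / (n + 2)) =ᶠ[nhds x]
        fun y => (y - c) ^ (n + 2) / (n + 2) := by
      filter_upwards [Ioi_mem_nhds hgt] with y hy
      rw [max_eq_left (by linarith [mem_Ioi.mp hy])]
    rw [max_eq_left (by linarith)]
    have hderiv : HasDerivAt (fun y : ℝ => (y - c) ^ (n + 2) / (n + 2)) ((x - c) ^ (n + 1)) x := by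
      refine (((hasDerivAt_pow (n + 2) (x - c)).comp_sub_const x c).div_const _).congr_deriv ?_
      push_cast
      field_simp
    exact hderiv.congr_of_eventuallyEq hpoly

theorem integral_max_sub_zero_pow_succ (n : ℕ) (a b c : ℝ) :
    ∫ x in a..b, max (x - c) 0 ^ (n + 1) =
      (max (b - c) 0 ^ (n + 2) - max (a - c) 0 ^ (n + 2)) / (n + 2) := by
  have hcont : Continuous fun x : ℝ => max (x - c) 0 :=
    (continuous_id.sub continuous_const).max continuous_const
  rw [sub_div]
  exact MeasureTheory.integral_eq_of_hasDerivAt_off_countable _ _ (countable_singleton c)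
    ((hcont.pow _).div_const _).continuousOn
    (fun x hx => hasDerivAt_max_sub_zero_pow_succ_succ n hx.2)
    ((hcont.pow _).intervalIntegrable a b)

theorem integral_max_add_sub_zero {x c : ℝ} (D : ℝ) (hxc : x ≤ c) :
    ∫ y in (0 : ℝ)..D, max (x + y - c) 0 = max (x - (c - D)) 0 ^ 2 / 2 := by
  have hprim := integral_max_sub_zero_pow_succ 0 0 D (c - x)
  simp only [zero_add, pow_one, Nat.cast_zero] at hprim
  simp_rw [show ∀ y, x + y - c = y - (c - x) from fun y => by ring, hprim,
    max_eq_right (by linarith : 0 - (c - x) ≤ 0), show D - (c - x) = x - (c - D) by ring]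
  ring

theorem expected_overage_shared_hl_general (B Dl Dh : ℝ)
    (h1 : Dl ≤ Dh) (h2 : Dh ≤ 2 * B) (h3 : 2 * B ≤ Dl + Dh) :
    (∫ x in (0:ℝ)..Dl, ∫ y in (0:ℝ)..Dh,
        max (x + y - 2 * B) 0 * (1 / Dl) * (1 / Dh))
      = (Dh + Dl - 2 * B) ^ 3 / (6 * Dh * Dl) := by
  have hinner : ∀ x ∈ uIcc 0 Dl, (∫ y in (0:ℝ)..Dh, max (x + y - 2 * B) 0 * (1 / Dl) * (1 / Dh))
      = max (x - (2 * B - Dh)) 0 ^ 2 / 2 * (1 / Dl) * (1 / Dh) := by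
    intro x hx
    rw [uIcc_of_le (by linarith)] at hx
    rw [integral_mul_const, integral_mul_const, integral_max_add_sub_zero Dh (by linarith [hx.2])]
  rw [integral_congr hinner, integral_mul_const, integral_mul_const, integral_div,
    integral_max_sub_zero_pow_succ 1 0 Dl (2 * B - Dh),
    max_eq_left (by linarith : 0 ≤ Dl - (2 * B - Dh)),
    max_eq_right (by linarith : 0 - (2 * B - Dh) ≤ 0)]
  push_cast
  ring

/-- Expected overage of a (heavy, light) family sharing quota 2B, with usages
independent uniform on [0, D_l] and [0, D_h], when D_l ≤ D_h ≤ 2B ≤ D_l + D_h. -/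
theorem expected_overage_shared_hl (B Dl Dh : ℝ) (hB : 0 < B) (hDl : 0 < Dl) (hDh : 0 < Dh)
    (h1 : Dl ≤ Dh) (h2 : Dh ≤ 2 * B) (h3 : 2 * B ≤ Dl + Dh) :
    (∫ x in (0:ℝ)..Dl, ∫ y in (0:ℝ)..Dh,
        max (x + y - 2 * B) 0 * (1 / Dl) * (1 / Dh))
      = (Dh + Dl - 2 * B) ^ 3 / (6 * Dh * Dl) :=
  expected_overage_shared_hl_general B Dl Dh h1 h2 h3
end

section
/- Let λ > λ₀ > 0, S > 0, α, N_i, N₀ > 0 and positive constants C, C^r. If 2N_i(C − C^r(λ+S)/S) ≤ N₀ C^r λ₀/S (i.e., κ_i ≤ 1), then for all T_i ≥ T_j ≥ 0, the derivative 2αN_i(C − C^r(λ+S)/S) e^{λT_j − (λ+S)T_i} − αN₀ C^r (λ₀/S) e^{λ₀T_j − (λ₀+S)T_i} is nonpositive. -/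
/-! Since `λ₀ < λ` and `T_j ≤ T_i`, the exponential weight of the first term is dominated by that
of the second, and `κ_i ≤ 1` says its coefficient is dominated too; as the second coefficient is
nonnegative, the first term is at most the second. -/

open Real

lemma exp_mul_sub_add_mul_le_of_le {a b S s t : ℝ} (hab : a ≤ b) (hst : s ≤ t) :
    exp (b * s - (b + S) * t) ≤ exp (a * s - (a + S) * t) :=
  exp_le_exp.mpr (by nlinarith)

theorem late_rollover_derivative_nonpos_general (lam lam0 S α Ni N0 C Cr : ℝ)
    (hll : lam0 < lam) (hl0 : 0 < lam0) (hS : 0 < S) (hα : 0 < α)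
    (hN0 : 0 < N0) (hCr : 0 < Cr)
    (hκ : 2 * Ni * (C - Cr * (lam + S) / S) ≤ N0 * Cr * lam0 / S) :
    ∀ Ti Tj : ℝ, 0 ≤ Tj → Tj ≤ Ti →
      2 * α * Ni * (C - Cr * (lam + S) / S) * Real.exp (lam * Tj - (lam + S) * Ti)
        - α * N0 * Cr * (lam0 / S) * Real.exp (lam0 * Tj - (lam0 + S) * Ti) ≤ 0 := by
  intro Ti Tj _ hTT
  have hB : 0 ≤ N0 * Cr * lam0 / S := by positivity
  have hterms : 2 * Ni * (C - Cr * (lam + S) / S) * exp (lam * Tj - (lam + S) * Ti)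
      ≤ N0 * Cr * lam0 / S * exp (lam0 * Tj - (lam0 + S) * Ti) :=
    mul_le_mul hκ (exp_mul_sub_add_mul_le_of_le hll.le hTT) (exp_pos _).le hB
  linear_combination α * hterms

/-- If κ_i ≤ 1, the derivative of the late-upgrade profit is nonpositive for all
T_i ≥ T_j ≥ 0: WSP i never benefits from delaying its rollover. -/
theorem late_rollover_derivative_nonpos (lam lam0 S α Ni N0 C Cr : ℝ)
    (hll : lam0 < lam) (hl0 : 0 < lam0) (hS : 0 < S) (hα : 0 < α)
    (hNi : 0 < Ni) (hN0 : 0 < N0) (hC : 0 < C) (hCr : 0 < Cr)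
    (hκ : 2 * Ni * (C - Cr * (lam + S) / S) ≤ N0 * Cr * lam0 / S) :
    ∀ Ti Tj : ℝ, 0 ≤ Tj → Tj ≤ Ti →
      2 * α * Ni * (C - Cr * (lam + S) / S) * Real.exp (lam * Tj - (lam + S) * Ti)
        - α * N0 * Cr * (lam0 / S) * Real.exp (lam0 * Tj - (lam0 + S) * Ti) ≤ 0 :=
  late_rollover_derivative_nonpos_general lam lam0 S α Ni N0 C Cr hll hl0 hS hα hN0 hCr hκ
end

section
/- Let S, λ, λ₀ > 0 with λ > λ₀, let α, N, N₀ > 0, N_i + N_j = N with N_i, N_j > 0, C^r > 0, and κ_j > 1. Then the first-mover profit R̄_i^{r,≤} = 2αN C^r/S − 2αN_j C^r/(S+λ) − 2αN_j C^r (1/S − 1/(λ+S)) κ_j^{−(λ+S)/(λ−λ₀)} + 2αN₀(1/S − 1/(S+λ₀)) C^r − αN₀(1/S − 1/(S+λ₀)) κ_j^{−(λ₀+S)/(λ−λ₀)} C^r is strictly greater than the simultaneous-upgrade profit R̄_i^r = 2αN_i C^r/S + αN₀(1/S − 1/(S+λ₀)) C^r. -/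
/-! Since `N = N_i + N_j`, the gap between the two profits is
`2αN_jC^r(1/S − 1/(λ+S))(1 − κ_j^{−(λ+S)/(λ−λ₀)})`
`  + αN₀C^r(1/S − 1/(S+λ₀))(1 − κ_j^{−(λ₀+S)/(λ−λ₀)})`,
a sum of two positive terms: the rate differences are positive and both powers of `κ_j > 1`
have negative exponents. -/

lemma firstMover_sub_simultaneous (S lam lam0 α N N0 Ni Nj Cr p q : ℝ)
    (hS : S ≠ 0) (hSl : S + lam ≠ 0) (hsum : Ni + Nj = N) :
    (2 * α * N * Cr / S - 2 * α * Nj * Cr / (S + lam)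
        - 2 * α * Nj * Cr * (1 / S - 1 / (lam + S)) * p
        + 2 * α * N0 * (1 / S - 1 / (S + lam0)) * Cr
        - α * N0 * (1 / S - 1 / (S + lam0)) * q * Cr)
      - (2 * α * Ni * Cr / S + α * N0 * (1 / S - 1 / (S + lam0)) * Cr)
      = 2 * α * Nj * Cr * (1 / S - 1 / (lam + S)) * (1 - p)
        + α * N0 * (1 / S - 1 / (S + lam0)) * Cr * (1 - q) := by
  subst hsum
  rw [add_comm lam S]
  field_simp
  ring

lemma rpow_neg_div_lt_one {κ a d : ℝ} (hκ : 1 < κ) (ha : 0 < a) (hd : 0 < d) :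
    κ ^ (-a / d) < 1 :=
  Real.rpow_lt_one_of_one_lt_of_neg hκ (div_neg_of_neg_of_pos (neg_neg_of_pos ha) hd)

theorem first_mover_beats_simultaneous_general (S lam lam0 α N N0 Ni Nj Cr κj : ℝ)
    (hS : 0 < S) (hll : lam0 < lam) (hl0 : 0 < lam0) (hα : 0 < α)
    (hN0 : 0 < N0) (hNj : 0 < Nj)
    (hsum : Ni + Nj = N) (hCr : 0 < Cr) (hκ : 1 < κj) :
    2 * α * Ni * Cr / S + α * N0 * (1 / S - 1 / (S + lam0)) * Cr
      < 2 * α * N * Cr / S - 2 * α * Nj * Cr / (S + lam)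
        - 2 * α * Nj * Cr * (1 / S - 1 / (lam + S)) * κj ^ (-(lam + S) / (lam - lam0))
        + 2 * α * N0 * (1 / S - 1 / (S + lam0)) * Cr
        - α * N0 * (1 / S - 1 / (S + lam0)) * κj ^ (-(lam0 + S) / (lam - lam0)) * Cr := by
  have hd : 0 < lam - lam0 := sub_pos.mpr hll
  have hp := rpow_neg_div_lt_one hκ (by linarith : 0 < lam + S) hd
  have hq := rpow_neg_div_lt_one hκ (by linarith : 0 < lam0 + S) hd
  have hrate : 0 < 1 / S - 1 / (lam + S) :=
    sub_pos.mpr (one_div_lt_one_div_of_lt hS (by linarith))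
  have hrate0 : 0 < 1 / S - 1 / (S + lam0) :=
    sub_pos.mpr (one_div_lt_one_div_of_lt hS (by linarith))
  have hgap := firstMover_sub_simultaneous S lam lam0 α N N0 Ni Nj Cr
    (κj ^ (-(lam + S) / (lam - lam0))) (κj ^ (-(lam0 + S) / (lam - lam0)))
    hS.ne' (by linarith) hsum
  have hpos :
      0 < 2 * α * Nj * Cr * (1 / S - 1 / (lam + S)) * (1 - κj ^ (-(lam + S) / (lam - lam0)))
      + α * N0 * (1 / S - 1 / (S + lam0)) * Cr * (1 - κj ^ (-(lam0 + S) / (lam - lam0))) := by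
    have := sub_pos.mpr hp
    have := sub_pos.mpr hq
    positivity
  linarith

/-- The sole-first-mover equilibrium rollover profit strictly exceeds the
simultaneous-upgrade profit. -/
theorem first_mover_beats_simultaneous (S lam lam0 α N N0 Ni Nj Cr κj : ℝ)
    (hS : 0 < S) (hll : lam0 < lam) (hl0 : 0 < lam0) (hα : 0 < α)
    (hN : 0 < N) (hN0 : 0 < N0) (hNi : 0 < Ni) (hNj : 0 < Nj)
    (hsum : Ni + Nj = N) (hCr : 0 < Cr) (hκ : 1 < κj) :
    2 * α * Ni * Cr / S + α * N0 * (1 / S - 1 / (S + lam0)) * Cr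
      < 2 * α * N * Cr / S - 2 * α * Nj * Cr / (S + lam)
        - 2 * α * Nj * Cr * (1 / S - 1 / (lam + S)) * κj ^ (-(lam + S) / (lam - lam0))
        + 2 * α * N0 * (1 / S - 1 / (S + lam0)) * Cr
        - α * N0 * (1 / S - 1 / (S + lam0)) * κj ^ (-(lam0 + S) / (lam - lam0)) * Cr :=
  first_mover_beats_simultaneous_general S lam lam0 α N N0 Ni Nj Cr κj hS hll hl0 hα hN0 hNj hsum
    hCr hκ
end

section
/- Let λ, S > 0 and positive reals EC_h, EC_l, EC_{h,l}, EC_{h,h}. If (EC_h + EC_l)/EC_{h,l} > (2λ+S)/S and 2·EC_h/EC_{h,h} > (2λ+S)/S, then for every α ∈ (0,1): 2S(EC_h + EC_l) − 2(2λ+S)EC_{h,l} > α·(2S·EC_l + (2λ+S)EC_{h,h} − 2(2λ+S)EC_{h,l}); that is, the condition D·S ≤ E·(2λ+S) fails for every α ∈ (0,1). -/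
/-!
Cross-multiplied, the hypothesis on `(h,h)` families says the bracket on the left is smaller
than the right-hand side, and the one on `(h,l)` families says the right-hand side is positive.
Both the bracket and `0` thus lie below the right-hand side, and so does every `α`-multiple of
the bracket with `α ∈ [0, 1]`, which lies between them.
-/

theorem mul_lt_of_mem_Icc_of_lt_of_pos {R : Type*} [Semiring R] [LinearOrder R]
    [IsOrderedRing R] {α x a : R} (hα : α ∈ Set.Icc 0 1) (hx : x < a) (ha : 0 < a) :
    α * x < a := by
  rcases le_or_gt x 0 with hx0 | hx0
  · exact (mul_nonpos_of_nonneg_of_nonpos hα.1 hx0).trans_lt ha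
  · exact (mul_le_of_le_one_left hx0.le hα.2).trans_lt hx

theorem significant_reduction_shared_plan_general (lam S ECh ECl EChl EChh : ℝ)
    (hS : 0 < S)
    (hEChl : 0 < EChl) (hEChh : 0 < EChh)
    (hhl : (2 * lam + S) / S < (ECh + ECl) / EChl)
    (hhh : (2 * lam + S) / S < 2 * ECh / EChh) :
    ∀ α ∈ Set.Ioo (0:ℝ) 1,
      α * (2 * S * ECl + (2 * lam + S) * EChh - 2 * (2 * lam + S) * EChl)
        < 2 * S * (ECh + ECl) - 2 * (2 * lam + S) * EChl := by
  rintro α ⟨hα0, hα1⟩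
  rw [div_lt_div_iff₀ hS hEChl] at hhl
  rw [div_lt_div_iff₀ hS hEChh] at hhh
  exact mul_lt_of_mem_Icc_of_lt_of_pos ⟨hα0.le, hα1.le⟩ (by linarith) (by linarith)

/-- Significant cost reduction for both family types: the condition
D·S ≤ E·(2λ+S) fails for every α ∈ (0,1). -/
theorem significant_reduction_shared_plan (lam S ECh ECl EChl EChh : ℝ)
    (hlam : 0 < lam) (hS : 0 < S)
    (hECh : 0 < ECh) (hECl : 0 < ECl) (hEChl : 0 < EChl) (hEChh : 0 < EChh)
    (hhl : (2 * lam + S) / S < (ECh + ECl) / EChl)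
    (hhh : (2 * lam + S) / S < 2 * ECh / EChh) :
    ∀ α ∈ Set.Ioo (0:ℝ) 1,
      α * (2 * S * ECl + (2 * lam + S) * EChh - 2 * (2 * lam + S) * EChl)
        < 2 * S * (ECh + ECl) - 2 * (2 * lam + S) * EChl :=
  significant_reduction_shared_plan_general lam S ECh ECl EChl EChh hS hEChl hEChh hhl hhh
end

section
/- Let λ > λ₀ > 0, S > 0, α > 0, N > 0, η₀ ∈ [0, 1), and C, C^r > 0 with C > C^r(λ+S)/S. Then the late-rollover profit with η_i = 1, R̄^{r,>} = 2αN·C/(λ+S)·(1 − κ^{−(λ+S)/(λ−λ₀)}) + 2αN·C^r/S·κ^{−(λ+S)/(λ−λ₀)} + α η₀ N (1/S − 1/(S+λ₀)) κ^{−(λ₀+S)/(λ−λ₀)} C^r, where κ = 2(C − C^r(λ+S)/S)/(η₀ C^r λ₀/S) > 1, is strictly less than the no-upgrade profit 2αN·C/S. -/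
/-!
Write `x = κ ^ (-(λ + S) / (λ - λ₀)) ∈ (0, 1)`; the third exponent is one more than the first,
so the new-user term carries a factor `κ x`, and the defining equation of `κ` turns
`η₀ C^r λ₀ κ / S` into `2 (C - C^r (λ + S) / S)`. After dividing by `2αN` the late-rollover
profit becomes the affine function
`C (1 - x) / (λ + S) + C^r x / S + (C - C^r (λ + S) / S) x / (S + λ₀)` of `x`, whose gap to
`C / S` is `C λ (1 - x) / (S (λ + S)) + x (C λ₀ + C^r (λ - λ₀)) / (S (S + λ₀)) > 0`.
-/

open Real

lemma rpow_neg_add_div_sub_eq_mul {κ : ℝ} (hκ : 0 < κ) {lam lam0 : ℝ} (h : lam0 < lam) (S : ℝ) :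
    κ ^ (-(lam0 + S) / (lam - lam0)) = κ * κ ^ (-(lam + S) / (lam - lam0)) := by
  have hne : lam - lam0 ≠ 0 := (sub_pos.mpr h).ne'
  have hexp : -(lam0 + S) / (lam - lam0) = 1 + -(lam + S) / (lam - lam0) := by
    field_simp; ring
  rw [hexp, rpow_add hκ, rpow_one]

lemma late_rollover_rate_lt_no_upgrade_rate {lam lam0 S C Cr x : ℝ}
    (hll : lam0 < lam) (hl0 : 0 ≤ lam0) (hS : 0 < S) (hC : 0 < C) (hCr : 0 ≤ Cr)
    (hx0 : 0 ≤ x) (hx1 : x < 1) :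
    C / (lam + S) * (1 - x) + Cr / S * x + (C - Cr * (lam + S) / S) / (S + lam0) * x < C / S := by
  have hlam : 0 < lam := hl0.trans_lt hll
  have hlamS : 0 < lam + S := by positivity
  have hSlam0 : 0 < S + lam0 := by positivity
  have hgap : C / S - (C / (lam + S) * (1 - x) + Cr / S * x
      + (C - Cr * (lam + S) / S) / (S + lam0) * x)
      = C * lam * (1 - x) / (S * (lam + S))
        + x * (C * lam0 + Cr * (lam - lam0)) / (S * (S + lam0)) := by
    field_simp
    ring
  have hpos : 0 < C * lam * (1 - x) / (S * (lam + S)) := by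
    have : 0 < 1 - x := sub_pos.mpr hx1
    positivity
  have hnonneg : 0 ≤ x * (C * lam0 + Cr * (lam - lam0)) / (S * (S + lam0)) := by
    have : 0 ≤ lam - lam0 := sub_nonneg.mpr hll.le
    positivity
  linarith

theorem late_rollover_loses_general (lam lam0 S α N η0 C Cr : ℝ)
    (hll : lam0 < lam) (hl0 : 0 < lam0) (hS : 0 < S) (hα : 0 < α) (hN : 0 < N)
    (hC : 0 < C) (hCr : 0 < Cr)
    (hκ : 1 < 2 * (C - Cr * (lam + S) / S) / (η0 * Cr * lam0 / S)) :
    2 * α * N * C / (lam + S)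
        * (1 - (2 * (C - Cr * (lam + S) / S) / (η0 * Cr * lam0 / S))
            ^ (-(lam + S) / (lam - lam0)))
      + 2 * α * N * Cr / S
        * (2 * (C - Cr * (lam + S) / S) / (η0 * Cr * lam0 / S))
            ^ (-(lam + S) / (lam - lam0))
      + α * η0 * N * (1 / S - 1 / (S + lam0))
        * (2 * (C - Cr * (lam + S) / S) / (η0 * Cr * lam0 / S))
            ^ (-(lam0 + S) / (lam - lam0)) * Cr
      < 2 * α * N * C / S := by
  set κ := 2 * (C - Cr * (lam + S) / S) / (η0 * Cr * lam0 / S) with hκ_def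
  have hκ_pos : 0 < κ := one_pos.trans hκ
  -- a zero denominator would give the junk value `κ = 0`
  have hden : η0 * Cr * lam0 / S ≠ 0 := fun h => by simp [hκ_def, h] at hκ_pos
  have hκ_eq : η0 * Cr * lam0 / S * κ = 2 * (C - Cr * (lam + S) / S) := mul_div_cancel₀ _ hden
  rw [rpow_neg_add_div_sub_eq_mul hκ_pos hll]
  set x := κ ^ (-(lam + S) / (lam - lam0))
  have hx0 : 0 < x := rpow_pos_of_pos hκ_pos _
  have hx1 : x < 1 :=
    rpow_lt_one_of_one_lt_of_neg hκ (div_neg_of_neg_of_pos (by linarith) (by linarith))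
  have hnew_users : α * η0 * N * (1 / S - 1 / (S + lam0)) * (κ * x) * Cr
      = α * N * x / (S + lam0) * (η0 * Cr * lam0 / S * κ) := by
    field_simp
    ring
  rw [hnew_users, hκ_eq]
  calc _ = 2 * α * N * (C / (lam + S) * (1 - x) + Cr / S * x
          + (C - Cr * (lam + S) / S) / (S + lam0) * x) := by ring
    _ < 2 * α * N * (C / S) := by
        gcongr
        exact late_rollover_rate_lt_no_upgrade_rate hll hl0.le hS hC hCr.le hx0.le hx1
    _ = 2 * α * N * C / S := by ring

/-- A WSP with full market share (η_i = 1) rolling over late at its optimal time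
earns strictly less than it would by never upgrading, when η₀ < 1 and the
overage-charge reduction is nontrivial. -/
theorem late_rollover_loses (lam lam0 S α N η0 C Cr : ℝ)
    (hll : lam0 < lam) (hl0 : 0 < lam0) (hS : 0 < S) (hα : 0 < α) (hN : 0 < N)
    (hη0 : 0 ≤ η0) (hη0' : η0 < 1) (hC : 0 < C) (hCr : 0 < Cr)
    (hred : Cr * (lam + S) / S < C)
    (hκ : 1 < 2 * (C - Cr * (lam + S) / S) / (η0 * Cr * lam0 / S)) :
    2 * α * N * C / (lam + S)
        * (1 - (2 * (C - Cr * (lam + S) / S) / (η0 * Cr * lam0 / S))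
            ^ (-(lam + S) / (lam - lam0)))
      + 2 * α * N * Cr / S
        * (2 * (C - Cr * (lam + S) / S) / (η0 * Cr * lam0 / S))
            ^ (-(lam + S) / (lam - lam0))
      + α * η0 * N * (1 / S - 1 / (S + lam0))
        * (2 * (C - Cr * (lam + S) / S) / (η0 * Cr * lam0 / S))
            ^ (-(lam0 + S) / (lam - lam0)) * Cr
      < 2 * α * N * C / S :=
  late_rollover_loses_general lam lam0 S α N η0 C Cr hll hl0 hS hα hN hC hCr hκ
end
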